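/- Let K, W ≥ 1, A : Fin K → Fin W → ℝ and B : Fin W → Fin K → ℝ, and define s(β) = (1/2) * ((1/K) * ∑_{k=1}^K RSM_β(A k) + (1/W) * ∑_{w=1}^W RSM_β(B w)) for β > 0. Then s(β) − (β/2) * (log K + log W) tends to (1/2) * ((1/(K*W)) * ∑_{k=1}^K ∑_{w=1}^W A k w + (1/(K*W)) * ∑_{w=1}^W ∑_{k=1}^K B w k) as β tends to +∞. -/

import Mathlib

/-!
With `t = 1/β`, the shifted RealSoftMax `β * log (∑ exp (x / β)) - β * log N` is the difference
quotient at `0` of the log-partition function `t ↦ log ∑ exp (t * x)`, whose derivative there is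
the mean of `x`. Averaging over the rows of `A` and of `B` gives the theorem.
-/

open Filter Real Topology

theorem HasDerivAt.tendsto_mul_sub_inv_atTop {F : ℝ → ℝ} {F' : ℝ} (hF : HasDerivAt F F' 0) :
    Tendsto (fun β : ℝ => β * (F β⁻¹ - F 0)) atTop (𝓝 F') := by
  have hinv : Tendsto (fun β : ℝ => β⁻¹) atTop (𝓝[≠] 0) :=
    tendsto_inv_atTop_nhdsGT_zero.mono_right (nhdsWithin_mono _ fun _ hy => ne_of_gt hy)
  refine ((hasDerivAt_iff_tendsto_slope.mp hF).comp hinv).congr' ?_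
  filter_upwards [eventually_ne_atTop 0] with β hβ
  simp [slope_def_field, mul_comm]

theorem hasDerivAt_log_sum_exp_mul_zero {ι : Type*} [Fintype ι] [Nonempty ι] (x : ι → ℝ) :
    HasDerivAt (fun t => log (∑ i, exp (t * x i))) ((∑ i, x i) / Fintype.card ι) 0 := by
  have hsum : HasDerivAt (fun t => ∑ i, exp (t * x i)) (∑ i, exp (0 * x i) * x i) 0 :=
    HasDerivAt.fun_sum fun i _ => (hasDerivAt_mul_const (x i)).exp
  have hsum_zero : ∑ i, exp (0 * x i) = Fintype.card ι := by simp
  simpa [hsum_zero] using hsum.log (by rw [hsum_zero]; positivity)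

theorem tendsto_mul_log_sum_exp_div_sub_mul_log_card {ι : Type*} [Fintype ι] [Nonempty ι]
    (x : ι → ℝ) :
    Tendsto (fun β : ℝ => β * log (∑ i, exp (x i / β)) - β * log (Fintype.card ι)) atTop
      (𝓝 ((∑ i, x i) / Fintype.card ι)) := by
  refine (hasDerivAt_log_sum_exp_mul_zero x).tendsto_mul_sub_inv_atTop.congr fun β => ?_
  simp [div_eq_inv_mul, mul_sub]

/-- The bidirectional RealSoftMax similarity
`s(β) = (1/2) * ((1/K) * ∑ k, RSM_β(A k) + (1/W) * ∑ w, RSM_β(B w))`, shifted by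
`(β/2) * (log K + log W)`, tends as `β → +∞` to
`(1/2) * ((1/(K*W)) * ∑ k ∑ w, A k w + (1/(K*W)) * ∑ w ∑ k, B w k)`. -/
theorem bidirectional_rsm_tendsto_mean (K W : ℕ) (hK : 1 ≤ K) (hW : 1 ≤ W)
    (A : Fin K → Fin W → ℝ) (B : Fin W → Fin K → ℝ) :
    Filter.Tendsto
      (fun β : ℝ =>
        (1 / 2 : ℝ) *
            ((1 / (K : ℝ)) * ∑ k, β * Real.log (∑ w, Real.exp (A k w / β)) +
             (1 / (W : ℝ)) * ∑ w, β * Real.log (∑ k, Real.exp (B w k / β))) -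
          (β / 2) * (Real.log K + Real.log W))
      Filter.atTop
      (nhds ((1 / 2 : ℝ) *
        ((1 / ((K : ℝ) * (W : ℝ))) * ∑ k, ∑ w, A k w +
         (1 / ((K : ℝ) * (W : ℝ))) * ∑ w, ∑ k, B w k))) := by
  have hrsm {N : ℕ} (hN : 1 ≤ N) (x : Fin N → ℝ) :
      Tendsto (fun β : ℝ => β * log (∑ l, exp (x l / β)) - β * log N) atTop
        (𝓝 ((∑ l, x l) / N)) := by
    have : Nonempty (Fin N) := ⟨⟨0, hN⟩⟩
    simpa using tendsto_mul_log_sum_exp_div_sub_mul_log_card x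
  have hA := tendsto_finsetSum Finset.univ fun k _ => hrsm hW (A k)
  have hB := tendsto_finsetSum Finset.univ fun w _ => hrsm hK (B w)
  have hK0 : (K : ℝ) ≠ 0 := by positivity
  have hW0 : (W : ℝ) ≠ 0 := by positivity
  convert ((hA.const_mul (1 / (K : ℝ))).add (hB.const_mul (1 / (W : ℝ)))).const_mul (1 / 2 : ℝ)
    using 1
  · ext β
    simp only [Finset.sum_sub_distrib, Finset.sum_const, Finset.card_univ, Fintype.card_fin,
      nsmul_eq_mul]
    field_simp
    ring
  · rw [← Finset.sum_div, ← Finset.sum_div]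
    field_simp
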